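/- arXiv:0711.1565 — 2 statements merged into one kernel-verified Lean document; each statement's English description precedes it below -/
import Mathlib

section
/- Let 𝒳 = {x₁, x₂} with x₁ ≠ x₂, let u₁, u₂ ∈ 𝒯 achieve the maximum of d_SI over all pairs of symbols of 𝒯 with d_SI(u₁,u₂) > 0, fix s ∈ 𝒮, and define φ : 𝒯 → {u₁, u₂} by φ(t) = u₁ if t(s) = u₁(s) and φ(t) = u₂ otherwise. Then for any two codewords (t₁,…,tₙ) and (r₁,…,rₙ) with tᵢ, rᵢ ∈ 𝒯, the squared distance does not decrease under replacement: Σᵢ₌₁ⁿ d_SI²(φ(tᵢ), φ(rᵢ)) ≥ Σᵢ₌₁ⁿ d_SI²(tᵢ, rᵢ). That is, the distance spectrum of the binary code obtained by the replacement is at least as good as that of the original code. -/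
open Finset

/-- The distance `d_SI` between two input symbols of the associated channel. -/
noncomputable def dSI (S : Finset ℝ) (hS : S.Nonempty) (t r : ℝ → ℝ) : ℝ :=
  (S ×ˢ S).inf' (hS.product hS) fun p => |t p.1 + p.1 - (r p.2 + p.2)|

/-!
The inequality holds coordinatewise. If `φ` sends `t` and `r` to the same symbol, then
`t(s₀)` and `r(s₀)` are both equal to, or both different from, `u₁(s₀)` in a two-letter
alphabet, so `t(s₀) = r(s₀)` and `d_SI(t, r) = 0` (take `s₁ = s₂ = s₀`). Otherwise
`{φ t, φ r} = {u₁, u₂}`, and `d_SI(u₁, u₂)` is the maximal distance.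
-/

lemma eq_of_mem_pair_of_ne {α : Type*} {x₁ x₂ a b c : α} (ha : a ∈ ({x₁, x₂} : Set α))
    (hb : b ∈ ({x₁, x₂} : Set α)) (hc : c ∈ ({x₁, x₂} : Set α)) (hac : a ≠ c) (hbc : b ≠ c) :
    a = b := by
  simp only [Set.mem_insert_iff, Set.mem_singleton_iff] at ha hb hc
  grind

section dSI

variable {S : Finset ℝ} {hS : S.Nonempty}

lemma dSI_nonneg (t r : ℝ → ℝ) : 0 ≤ dSI S hS t r :=
  Finset.le_inf' _ _ fun _ _ => abs_nonneg _

lemma dSI_le_abs_sub (t r : ℝ → ℝ) {s₁ s₂ : ℝ} (h₁ : s₁ ∈ S) (h₂ : s₂ ∈ S) :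
    dSI S hS t r ≤ |t s₁ + s₁ - (r s₂ + s₂)| :=
  Finset.inf'_le _ (Finset.mk_mem_product h₁ h₂)

lemma dSI_comm (t r : ℝ → ℝ) : dSI S hS t r = dSI S hS r t := by
  apply le_antisymm <;>
  · refine Finset.le_inf' _ _ fun p hp => ?_
    rw [Finset.mem_product] at hp
    rw [abs_sub_comm]
    exact dSI_le_abs_sub _ _ hp.2 hp.1

lemma dSI_eq_zero_of_apply_eq {t r : ℝ → ℝ} {s : ℝ} (hs : s ∈ S) (h : t s = r s) :
    dSI S hS t r = 0 := by
  refine le_antisymm ?_ (dSI_nonneg t r)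
  simpa [h] using dSI_le_abs_sub (hS := hS) t r hs hs

lemma dSI_le_dSI_of_binary_replacement {x₁ x₂ s₀ : ℝ} {u₁ u₂ t r : ℝ → ℝ}
    {φ : (ℝ → ℝ) → (ℝ → ℝ)} (hs₀ : s₀ ∈ S)
    (hφ : ∀ t : ℝ → ℝ, (t s₀ = u₁ s₀ → φ t = u₁) ∧ (t s₀ ≠ u₁ s₀ → φ t = u₂))
    (hu₁ : u₁ s₀ ∈ ({x₁, x₂} : Set ℝ)) (ht : t s₀ ∈ ({x₁, x₂} : Set ℝ))
    (hr : r s₀ ∈ ({x₁, x₂} : Set ℝ)) (hmax : dSI S hS t r ≤ dSI S hS u₁ u₂) :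
    dSI S hS t r ≤ dSI S hS (φ t) (φ r) := by
  by_cases heq : t s₀ = r s₀
  · rw [dSI_eq_zero_of_apply_eq hs₀ heq]
    exact dSI_nonneg _ _
  by_cases h₁ : t s₀ = u₁ s₀
  · have h₂ : r s₀ ≠ u₁ s₀ := fun h => heq (h₁.trans h.symm)
    rwa [(hφ t).1 h₁, (hφ r).2 h₂]
  · have h₂ : r s₀ = u₁ s₀ := by
      by_contra h₂
      exact heq (eq_of_mem_pair_of_ne ht hr hu₁ h₁ h₂)
    rwa [(hφ t).2 h₁, (hφ r).1 h₂, dSI_comm u₂]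

end dSI

theorem stmt4_general (x₁ x₂ : ℝ) (S : Finset ℝ) (hS : S.Nonempty)
    (u₁ u₂ : ℝ → ℝ)
    (hu₁ : ∀ s ∈ S, u₁ s ∈ ({x₁, x₂} : Set ℝ))
    (hmax : ∀ t r : ℝ → ℝ, (∀ s ∈ S, t s ∈ ({x₁, x₂} : Set ℝ)) →
      (∀ s ∈ S, r s ∈ ({x₁, x₂} : Set ℝ)) → dSI S hS t r ≤ dSI S hS u₁ u₂)
    (s₀ : ℝ) (hs₀ : s₀ ∈ S)
    (φ : (ℝ → ℝ) → (ℝ → ℝ))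
    (hφ : ∀ t : ℝ → ℝ, (t s₀ = u₁ s₀ → φ t = u₁) ∧ (t s₀ ≠ u₁ s₀ → φ t = u₂)) :
    ∀ (n : ℕ) (t r : Fin n → ℝ → ℝ),
      (∀ i, ∀ s ∈ S, t i s ∈ ({x₁, x₂} : Set ℝ)) →
      (∀ i, ∀ s ∈ S, r i s ∈ ({x₁, x₂} : Set ℝ)) →
      ∑ i, dSI S hS (φ (t i)) (φ (r i)) ^ 2 ≥ ∑ i, dSI S hS (t i) (r i) ^ 2 := by
  intro n t r ht hr
  refine Finset.sum_le_sum fun i _ => pow_le_pow_left₀ (dSI_nonneg _ _) ?_ 2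
  exact dSI_le_dSI_of_binary_replacement hs₀ hφ (hu₁ s₀ hs₀) (ht i s₀ hs₀) (hr i s₀ hs₀)
    (hmax _ _ (ht i) (hr i))

/-- Binary channel: with `u₁, u₂` a maximal-distance pair (`d_SI(u₁,u₂) > 0`), `s₀ ∈ S`,
and the replacement map `φ` (sending `t` to `u₁` if `t s₀ = u₁ s₀`, else to `u₂`),
the squared distance between any two codewords does not decrease under coordinatewise
replacement: `∑ i, d_SI(φ(tᵢ), φ(rᵢ))² ≥ ∑ i, d_SI(tᵢ, rᵢ)²`. That is, the distance
spectrum of the resulting binary code is at least as good as that of the original code. -/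
theorem stmt4 (x₁ x₂ : ℝ) (hx : x₁ ≠ x₂) (S : Finset ℝ) (hS : S.Nonempty)
    (u₁ u₂ : ℝ → ℝ)
    (hu₁ : ∀ s ∈ S, u₁ s ∈ ({x₁, x₂} : Set ℝ))
    (hu₂ : ∀ s ∈ S, u₂ s ∈ ({x₁, x₂} : Set ℝ))
    (hmax : ∀ t r : ℝ → ℝ, (∀ s ∈ S, t s ∈ ({x₁, x₂} : Set ℝ)) →
      (∀ s ∈ S, r s ∈ ({x₁, x₂} : Set ℝ)) → dSI S hS t r ≤ dSI S hS u₁ u₂)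
    (hpos : 0 < dSI S hS u₁ u₂)
    (s₀ : ℝ) (hs₀ : s₀ ∈ S)
    (φ : (ℝ → ℝ) → (ℝ → ℝ))
    (hφ : ∀ t : ℝ → ℝ, (t s₀ = u₁ s₀ → φ t = u₁) ∧ (t s₀ ≠ u₁ s₀ → φ t = u₂)) :
    ∀ (n : ℕ) (t r : Fin n → ℝ → ℝ),
      (∀ i, ∀ s ∈ S, t i s ∈ ({x₁, x₂} : Set ℝ)) →
      (∀ i, ∀ s ∈ S, r i s ∈ ({x₁, x₂} : Set ℝ)) →
      ∑ i, dSI S hS (φ (t i)) (φ (r i)) ^ 2 ≥ ∑ i, dSI S hS (t i) (r i) ^ 2 :=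
  stmt4_general x₁ x₂ S hS u₁ u₂ hu₁ hmax s₀ hs₀ φ hφ
end

section
/- Let 𝒳 = {x₁, …, x_M} ⊆ ℝ and 𝒮 ⊆ ℝ be finite with at least one element. Suppose min over distinct s, s' ∈ 𝒮 of |s − s'| ≥ 2 · max over x, x' ∈ 𝒳 of |x − x'|. Then for all x_p, x_q ∈ 𝒳, the constant functions u_p(s) = x_p and u_q(s) = x_q satisfy d_SI(u_p, u_q) = |x_p − x_q|. -/
open Finset

/- Two interference values `s₁ ≠ s₂` shift the received points apart by `|s₁ - s₂| ≥ 2|x_p - x_q|`,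
which outweighs the input difference; so the minimum defining `d_SI` is attained on the diagonal
`s₁ = s₂`, where it equals `|x_p - x_q|`. -/

theorem abs_le_abs_add_of_two_mul_abs_le {α : Type*}
    [Field α] [LinearOrder α] [IsStrictOrderedRing α] {a b : α} (h : 2 * |a| ≤ |b|) : |a| ≤ |a + b| := by
  have := abs_add_le (a + b) (-a)
  rw [add_neg_cancel_comm, abs_neg] at this
  linarith

section dSI

variable {S : Finset ℝ} {hS : S.Nonempty} {t r : ℝ → ℝ}

theorem dSI_le {s₁ s₂ : ℝ} (h₁ : s₁ ∈ S) (h₂ : s₂ ∈ S) :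
    dSI S hS t r ≤ |t s₁ + s₁ - (r s₂ + s₂)| :=
  inf'_le _ (mk_mem_product h₁ h₂)

theorem le_dSI_iff {c : ℝ} :
    c ≤ dSI S hS t r ↔ ∀ s₁ ∈ S, ∀ s₂ ∈ S, c ≤ |t s₁ + s₁ - (r s₂ + s₂)| := by
  simp only [dSI, le_inf'_iff, mem_product, and_imp, Prod.forall]
  exact ⟨fun h s₁ h₁ s₂ h₂ => h s₁ s₂ h₁ h₂, fun h s₁ s₂ h₁ h₂ => h s₁ h₁ s₂ h₂⟩

end dSI

theorem stmt8_general (X S : Finset ℝ) (hS : S.Nonempty)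
    (hgap : ∀ s ∈ S, ∀ s' ∈ S, s ≠ s' → ∀ x ∈ X, ∀ x' ∈ X, |s - s'| ≥ 2 * |x - x'|) :
    ∀ xp ∈ X, ∀ xq ∈ X,
      dSI S hS (fun _ => xp) (fun _ => xq) = |xp - xq| := by
  intro xp hxp xq hxq
  obtain ⟨s, hs⟩ := id hS
  refine le_antisymm ((dSI_le hs hs).trans_eq (by ring_nf)) (le_dSI_iff.2 fun s₁ h₁ s₂ h₂ => ?_)
  rw [show xp + s₁ - (xq + s₂) = xp - xq + (s₁ - s₂) by ring]
  obtain rfl | hne := eq_or_ne s₁ s₂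
  · simp
  · exact abs_le_abs_add_of_two_mul_abs_le (hgap s₁ h₁ s₂ h₂ hne xp hxp xq hxq)

/-- If the minimum gap between distinct interference symbols is at least twice the
maximum spread of the input alphabet `X`, then for all `x_p, x_q ∈ X` the constant
functions `u_p ≡ x_p` and `u_q ≡ x_q` satisfy `d_SI(u_p, u_q) = |x_p - x_q|`. -/
theorem stmt8 (X S : Finset ℝ) (hX : X.Nonempty) (hS : S.Nonempty)
    (hgap : ∀ s ∈ S, ∀ s' ∈ S, s ≠ s' → ∀ x ∈ X, ∀ x' ∈ X, |s - s'| ≥ 2 * |x - x'|) :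
    ∀ xp ∈ X, ∀ xq ∈ X,
      dSI S hS (fun _ => xp) (fun _ => xq) = |xp - xq| :=
  stmt8_general X S hS hgap
end
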